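/- Let (G,·) be a Moufang loop with S⊴G, G/S cyclic of order 2m generated by α, and 1≠h∈S∩Z(G). Define x*y = xy·h^{σ(i+j)} for x∈α^i, y∈α^j (i,j∈M). Then (G,*) is a Moufang loop, the associators of (G,·) and (G,*) coincide, the associator subloops are equal as loops, and N(G,·)=N(G,*) as sets. -/

import Mathlib

/-- A Moufang loop: a loop (with two-sided inverses satisfying the inverse
properties, which hold in any Moufang loop) satisfying the Moufang identity
((xy)x)z = x(y(xz)). -/
class MufLoop (Q : Type*) extends Mul Q, One Q, Inv Q where
  one_mul : ∀ x : Q, 1 * x = x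
  mul_one : ∀ x : Q, x * 1 = x
  inv_mul_cancel_left : ∀ x y : Q, x⁻¹ * (x * y) = y
  mul_inv_cancel_left : ∀ x y : Q, x * (x⁻¹ * y) = y
  mul_inv_cancel_right : ∀ x y : Q, (x * y) * y⁻¹ = x
  inv_mul_cancel_right : ∀ x y : Q, (x * y⁻¹) * y = x
  moufang : ∀ x y z : Q, ((x * y) * x) * z = x * (y * (x * z))

/-- σ(i)=1 if i>m, 0 if i ∈ M = {-m+1,...,m}, -1 if i<1-m. -/
def sgnM (m : ℕ) (i : ℤ) : ℤ :=
  if (m : ℤ) < i then 1 else if i < 1 - (m : ℤ) then -1 else 0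

/-- Natural powers in a Moufang loop. -/
def mnpow {Q : Type*} [MufLoop Q] (a : Q) : ℕ → Q
  | 0 => 1
  | n + 1 => mnpow a n * a

/-- Integer powers in a Moufang loop. -/
def mzpow {Q : Type*} [MufLoop Q] (a : Q) : ℤ → Q
  | Int.ofNat n => mnpow a n
  | Int.negSucc n => (mnpow a (n + 1))⁻¹

/-- A subset of a magma is a subloop if it contains the unit, is closed under
multiplication, and equations are solvable within it. -/
def IsSubloopM {G : Type*} (mul : G → G → G) (one : G) (A : Set G) : Prop :=
  one ∈ A ∧ (∀ a ∈ A, ∀ b ∈ A, mul a b ∈ A) ∧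
    (∀ a ∈ A, ∀ b ∈ A, ∃ c ∈ A, mul a c = b) ∧
    (∀ a ∈ A, ∀ b ∈ A, ∃ c ∈ A, mul c a = b)

/-- A subloop A is normal if xA = Ax, x(Ay) = (xA)y and x(yA) = (xy)A. -/
def IsNormalSubloopM {G : Type*} (mul : G → G → G) (one : G) (A : Set G) : Prop :=
  IsSubloopM mul one A ∧
  (∀ x : G, (fun a => mul x a) '' A = (fun a => mul a x) '' A) ∧
  (∀ x y : G, (fun b => mul x b) '' ((fun a => mul a y) '' A)
      = (fun b => mul b y) '' ((fun a => mul x a) '' A)) ∧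
  (∀ x y : G, (fun b => mul x b) '' ((fun a => mul y a) '' A)
      = (fun a => mul (mul x y) a) '' A)

/-- The subloop generated by a subset. -/
def genSubloopM {G : Type*} (mul : G → G → G) (one : G) (T : Set G) : Set G :=
  ⋂₀ {A : Set G | IsSubloopM mul one A ∧ T ⊆ A}

/-- The nucleus of a magma: elements associating with all pairs in all positions. -/
def nucSetM {G : Type*} (mul : G → G → G) : Set G :=
  {x | ∀ y z : G, mul x (mul y z) = mul (mul x y) z ∧
        mul y (mul x z) = mul (mul y x) z ∧
        mul y (mul z x) = mul (mul y z) x}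

/-- The cyclic construction on a Moufang loop: x * y · h^{σ(ind x + ind y)}. -/
def cmulM (m : ℕ) {G : Type*} [MufLoop G] (ind : G → ℤ) (h : G) (x y : G) : G :=
  x * y * mzpow h (sgnM m (ind x + ind y))

/-!
Since `h` is central and nuclear, every bracketing of a `∗`-product of `x₁, …, xₙ` equals the
same bracketing of the `·`-product times `h ^ c`, where `c` is the carry of
`ind x₁ + ⋯ + ind xₙ`: the unique `c` with `ind x₁ + ⋯ + ind xₙ - 2mc ∈ M`. Indeed `ind (x ∗ y)`
is the representative in `M` of `ind x + ind y`, so carries add up like in long addition. As `c`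
does not depend on the bracketing, the Moufang identity and every associativity relation
transfer between the two products after cancelling `h ^ c`. Finally, both products agree on the
kernel of `G → ℤ/2m`, which contains all associators.
-/

namespace MufLoop

variable {G : Type*} [MufLoop G]

theorem mul_left_cancel {a u v : G} (huv : a * u = a * v) : u = v := by
  simpa only [MufLoop.inv_mul_cancel_left] using congrArg (a⁻¹ * ·) huv

theorem mul_right_cancel_iff {a u v : G} : u * a = v * a ↔ u = v :=
  ⟨fun huv => by simpa only [MufLoop.mul_inv_cancel_right] using congrArg (· * a⁻¹) huv,
    congrArg (· * a)⟩

theorem mul_inv_self (a : G) : a * a⁻¹ = 1 := by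
  simpa only [MufLoop.one_mul] using MufLoop.mul_inv_cancel_right (1 : G) a

theorem inv_mul_self (a : G) : a⁻¹ * a = 1 := by
  simpa only [MufLoop.one_mul] using MufLoop.inv_mul_cancel_right (1 : G) a

theorem eq_inv_of_mul_eq_one {a b : G} (hab : a * b = 1) : b = a⁻¹ := by
  simpa only [MufLoop.inv_mul_cancel_left, MufLoop.mul_one] using congrArg (a⁻¹ * ·) hab

theorem bijective_mul_left (a : G) : Function.Bijective (a * ·) :=
  Function.bijective_iff_has_inverse.2
    ⟨(a⁻¹ * ·), MufLoop.inv_mul_cancel_left a, MufLoop.mul_inv_cancel_left a⟩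

theorem bijective_mul_right (a : G) : Function.Bijective (· * a) :=
  Function.bijective_iff_has_inverse.2
    ⟨(· * a⁻¹), fun x => MufLoop.mul_inv_cancel_right x a,
      fun x => MufLoop.inv_mul_cancel_right x a⟩

theorem bijective_mul_self_apply (g : G → G) (hg : ∀ x, g (x * g x) = g x)
    (hg' : ∀ x, g (x * (g x)⁻¹) = g x) : Function.Bijective fun x => x * g x := by
  refine Function.bijective_iff_has_inverse.2 ⟨fun x => x * (g x)⁻¹, fun x => ?_, fun x => ?_⟩
  · simp only [hg, MufLoop.mul_inv_cancel_right]
  · simp only [hg', MufLoop.inv_mul_cancel_right]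

/-- Membership in the centre `Z(G)` of a loop, the intersection of its commutant and nucleus. -/
structure IsCentral (a : G) : Prop where
  comm : ∀ y, a * y = y * a
  assoc_left : ∀ y z, a * (y * z) = (a * y) * z
  assoc_mid : ∀ y z, y * (a * z) = (y * a) * z
  assoc_right : ∀ y z, y * (z * a) = (y * z) * a

theorem isCentral_one : IsCentral (1 : G) where
  comm y := by rw [MufLoop.one_mul, MufLoop.mul_one]
  assoc_left y z := by simp only [MufLoop.one_mul]
  assoc_mid y z := by simp only [MufLoop.one_mul, MufLoop.mul_one]
  assoc_right y z := by simp only [MufLoop.mul_one]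

namespace IsCentral

variable {a b : G}

theorem mul (ha : IsCentral a) (hb : IsCentral b) : IsCentral (a * b) where
  comm y := calc
    (a * b) * y = a * (y * b) := by rw [← ha.assoc_left, hb.comm]
    _ = (y * a) * b := by rw [hb.assoc_right, ha.comm]
    _ = y * (a * b) := (hb.assoc_right y a).symm
  assoc_left y z := by rw [← ha.assoc_left, hb.assoc_left, ha.assoc_left, ha.assoc_left]
  assoc_mid y z := calc
    y * ((a * b) * z) = (y * a) * (b * z) := by rw [← ha.assoc_left, ha.assoc_mid]
    _ = (y * (a * b)) * z := by rw [hb.assoc_mid, hb.assoc_right]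
  assoc_right y z := calc
    y * (z * (a * b)) = (y * (z * a)) * b := by rw [hb.assoc_right, hb.assoc_right]
    _ = (y * z) * (a * b) := by rw [ha.assoc_right, hb.assoc_right]

theorem inv (ha : IsCentral a) : IsCentral a⁻¹ := by
  have comm : ∀ y, a⁻¹ * y = y * a⁻¹ := fun y => MufLoop.mul_right_cancel_iff.1 <| calc
    (a⁻¹ * y) * a = a⁻¹ * (a * y) := by rw [← ha.assoc_right, ha.comm]
    _ = (y * a⁻¹) * a := by rw [MufLoop.inv_mul_cancel_left, MufLoop.inv_mul_cancel_right]
  have assoc_left : ∀ y z, a⁻¹ * (y * z) = (a⁻¹ * y) * z := fun y z =>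
    MufLoop.mul_left_cancel (a := a) <| by
      rw [MufLoop.mul_inv_cancel_left, ha.assoc_left, MufLoop.mul_inv_cancel_left]
  have assoc_right : ∀ y z, y * (z * a⁻¹) = (y * z) * a⁻¹ := fun y z =>
    MufLoop.mul_right_cancel_iff.1 <| by
      rw [← ha.assoc_right, MufLoop.inv_mul_cancel_right, MufLoop.inv_mul_cancel_right]
  refine ⟨comm, assoc_left, fun y z => ?_, assoc_right⟩
  rw [comm, assoc_right, ← comm, assoc_left, comm]

theorem mnpow (ha : IsCentral a) : ∀ n, IsCentral (mnpow a n)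
  | 0 => isCentral_one
  | n + 1 => (ha.mnpow n).mul ha

theorem mzpow (ha : IsCentral a) : ∀ e, IsCentral (mzpow a e)
  | Int.ofNat n => ha.mnpow n
  | Int.negSucc n => (ha.mnpow (n + 1)).inv

theorem mul_right_comm (ha : IsCentral a) (x y : G) : (x * a) * y = (x * y) * a := by
  rw [← ha.assoc_mid, ha.comm, ha.assoc_right]

theorem mul_mul_mul_comm (ha : IsCentral a) (hb : IsCentral b) (x y : G) :
    (x * a) * (y * b) = (x * y) * (a * b) := by
  rw [hb.assoc_right, ha.mul_right_comm, hb.assoc_right]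

theorem mul_inv_rev (ha : IsCentral a) (u : G) : (u * a)⁻¹ = u⁻¹ * a⁻¹ := by
  refine (MufLoop.eq_inv_of_mul_eq_one ?_).symm
  rw [ha.inv.assoc_right, ← ha.comm, MufLoop.mul_inv_cancel_right, MufLoop.mul_inv_self]

theorem mzpow_add_one (ha : IsCentral a) :
    ∀ e : ℤ, _root_.mzpow a (e + 1) = _root_.mzpow a e * a
  | Int.ofNat _ => rfl
  | Int.negSucc 0 => by
      show (1 : G) = (1 * a)⁻¹ * a
      rw [MufLoop.one_mul, MufLoop.inv_mul_self]
  | Int.negSucc (k + 1) => by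
      rw [show Int.negSucc (k + 1) + 1 = Int.negSucc k by omega]
      show (_root_.mnpow a (k + 1))⁻¹ = (_root_.mnpow a (k + 1) * a)⁻¹ * a
      rw [ha.mul_inv_rev, MufLoop.inv_mul_cancel_right]

theorem mzpow_sub_one (ha : IsCentral a) (e : ℤ) :
    _root_.mzpow a (e - 1) = _root_.mzpow a e * a⁻¹ := by
  rw [← MufLoop.mul_inv_cancel_right (_root_.mzpow a (e - 1)) a, ← ha.mzpow_add_one,
    sub_add_cancel]

theorem mzpow_add (ha : IsCentral a) (e₁ e₂ : ℤ) :
    _root_.mzpow a (e₁ + e₂) = _root_.mzpow a e₁ * _root_.mzpow a e₂ := by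
  induction e₂ using Int.induction_on with
  | zero => rw [add_zero]; exact (MufLoop.mul_one _).symm
  | succ k ih =>
    rw [← add_assoc, ha.mzpow_add_one, ih, ha.mzpow_add_one, ha.assoc_right]
  | pred k ih =>
    rw [← add_sub_assoc, ha.mzpow_sub_one, ih, ha.mzpow_sub_one, ha.inv.assoc_right]

end IsCentral

end MufLoop

/-- The carry of `s`: the unique `c` with `s - 2mc ∈ M = [1 - m, m]` (for `0 < m`). It extends
`sgnM m` from `[2 - 2m, 2m]` to all of `ℤ`. -/
def carryM (m : ℕ) (s : ℤ) : ℤ := (s + m - 1) / (2 * m)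

section Carry

variable {m : ℕ}

theorem carryM_eq_iff (hm : 0 < m) {s q : ℤ} :
    carryM m s = q ↔ 1 - (m : ℤ) ≤ s - 2 * m * q ∧ s - 2 * m * q ≤ m := by
  rw [carryM, Int.ediv_eq_iff_of_pos (by omega)]
  constructor <;> rintro ⟨h₁, h₂⟩ <;> constructor <;> linarith

theorem sub_carryM_mem (hm : 0 < m) (s : ℤ) :
    1 - (m : ℤ) ≤ s - 2 * m * carryM m s ∧ s - 2 * m * carryM m s ≤ m :=
  (carryM_eq_iff hm).1 rfl

theorem carryM_eq_zero (hm : 0 < m) {s : ℤ} (h₁ : 1 - (m : ℤ) ≤ s) (h₂ : s ≤ m) :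
    carryM m s = 0 :=
  (carryM_eq_iff hm).2 (by simpa using And.intro h₁ h₂)

theorem carryM_sub_mul (hm : 0 < m) (s q : ℤ) :
    carryM m (s - 2 * m * q) = carryM m s - q := by
  obtain ⟨h₁, h₂⟩ := sub_carryM_mem hm s
  exact (carryM_eq_iff hm).2 ⟨by linarith, by linarith⟩

theorem sgnM_eq_carryM (hm : 0 < m) {t : ℤ} (h₁ : 2 - 2 * (m : ℤ) ≤ t) (h₂ : t ≤ 2 * m) :
    sgnM m t = carryM m t := by
  refine ((carryM_eq_iff hm).2 ?_).symm
  unfold sgnM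
  split_ifs <;> constructor <;> omega

theorem sgnM_eq_zero {t : ℤ} (h₁ : 1 - (m : ℤ) ≤ t) (h₂ : t ≤ m) : sgnM m t = 0 := by
  unfold sgnM
  split_ifs <;> omega

end Carry

section Subloop

variable {G : Type*} {mul mul₁ mul₂ : G → G → G} {one : G} {K T : Set G}

def associatorSet (mul : G → G → G) : Set G :=
  {w | ∃ x y z, mul (mul x y) z = mul (mul x (mul y z)) w}

theorem genSubloopM_subset {A : Set G} (hA : IsSubloopM mul one A) (hT : T ⊆ A) :
    genSubloopM mul one T ⊆ A :=
  Set.sInter_subset_of_mem ⟨hA, hT⟩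

theorem genSubloopM_subset_of_eqOn (hone : one ∈ K)
    (hK₁ : ∀ a ∈ K, ∀ c, (mul₁ a c ∈ K ↔ c ∈ K) ∧ (mul₁ c a ∈ K ↔ c ∈ K))
    (hK₂ : ∀ a ∈ K, ∀ c, (mul₂ a c ∈ K ↔ c ∈ K) ∧ (mul₂ c a ∈ K ↔ c ∈ K))
    (heq : ∀ a ∈ K, ∀ b ∈ K, mul₁ a b = mul₂ a b) (hT : T ⊆ K) :
    genSubloopM mul₁ one T ⊆ genSubloopM mul₂ one T := by
  refine Set.subset_sInter fun A ⟨⟨h1A, hmulA, hdivlA, hdivrA⟩, hTA⟩ => ?_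
  refine (genSubloopM_subset (A := A ∩ K) ⟨⟨h1A, hone⟩, ?_, ?_, ?_⟩
    (Set.subset_inter hTA hT)).trans Set.inter_subset_left
  · rintro a ⟨haA, haK⟩ b ⟨hbA, hbK⟩
    exact ⟨heq a haK b hbK ▸ hmulA a haA b hbA, ((hK₁ a haK b).1).2 hbK⟩
  · rintro a ⟨haA, haK⟩ b ⟨hbA, hbK⟩
    obtain ⟨c, hcA, rfl⟩ := hdivlA a haA b hbA
    have hcK := ((hK₂ a haK c).1).1 hbK
    exact ⟨c, ⟨hcA, hcK⟩, heq a haK c hcK⟩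
  · rintro a ⟨haA, haK⟩ b ⟨hbA, hbK⟩
    obtain ⟨c, hcA, rfl⟩ := hdivrA a haA b hbA
    have hcK := ((hK₂ a haK c).2).1 hbK
    exact ⟨c, ⟨hcA, hcK⟩, heq c hcK a haK⟩

theorem genSubloopM_eq_of_eqOn (hone : one ∈ K)
    (hK₁ : ∀ a ∈ K, ∀ c, (mul₁ a c ∈ K ↔ c ∈ K) ∧ (mul₁ c a ∈ K ↔ c ∈ K))
    (hK₂ : ∀ a ∈ K, ∀ c, (mul₂ a c ∈ K ↔ c ∈ K) ∧ (mul₂ c a ∈ K ↔ c ∈ K))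
    (heq : ∀ a ∈ K, ∀ b ∈ K, mul₁ a b = mul₂ a b) (hT : T ⊆ K) :
    genSubloopM mul₁ one T = genSubloopM mul₂ one T :=
  (genSubloopM_subset_of_eqOn hone hK₁ hK₂ heq hT).antisymm
    (genSubloopM_subset_of_eqOn hone hK₂ hK₁ (fun a ha b hb => (heq a ha b hb).symm) hT)

end Subloop

/-- The data of the cyclic construction: `f` is the projection `G → G/S ≅ ℤ/2m` sending `α` to `1`,
so that `x ∈ α ^ ind x`, with `ind x` the representative of `f x` in `M`. -/
structure CyclicConstruction (m : ℕ) (G : Type*) [MufLoop G] where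
  f : G → ZMod (2 * m)
  map_mul : ∀ x y, f (x * y) = f x + f y
  ind : G → ℤ
  ind_mem : ∀ x, ind x ∈ Set.Icc (1 - (m : ℤ)) m
  cast_ind : ∀ x, (ind x : ZMod (2 * m)) = f x
  h : G
  f_h : f h = 0
  isCentral_h : MufLoop.IsCentral h

namespace CyclicConstruction

variable {m : ℕ} {G : Type*} [MufLoop G] (C : CyclicConstruction m G)

local infixl:70 " ∗ " => cmulM m C.ind C.h

theorem pos (C : CyclicConstruction m G) : 0 < m := by
  obtain ⟨h₁, h₂⟩ := C.ind_mem 1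
  omega

theorem map_one : C.f 1 = 0 := by
  have h11 := C.map_mul 1 1
  rwa [MufLoop.mul_one, left_eq_add] at h11

theorem map_inv (x : G) : C.f x⁻¹ = -C.f x :=
  eq_neg_of_add_eq_zero_right (by rw [← C.map_mul, MufLoop.mul_inv_self, C.map_one])

theorem f_mnpow (n : ℕ) : C.f (mnpow C.h n) = 0 := by
  induction n with
  | zero => exact C.map_one
  | succ n ih => rw [mnpow, C.map_mul, ih, C.f_h, add_zero]

theorem f_mzpow : ∀ e, C.f (mzpow C.h e) = 0
  | Int.ofNat n => C.f_mnpow n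
  | Int.negSucc n => by rw [mzpow, C.map_inv, C.f_mnpow, neg_zero]

theorem map_cmul (x y : G) : C.f (x ∗ y) = C.f x + C.f y := by
  rw [cmulM, C.map_mul, C.map_mul, C.f_mzpow, add_zero]

theorem ind_eq_of_cast {u : G} {r : ℤ} (hr₁ : 1 - (m : ℤ) ≤ r) (hr₂ : r ≤ m)
    (hu : (r : ZMod (2 * m)) = C.f u) : C.ind u = r := by
  obtain ⟨h₁, h₂⟩ := C.ind_mem u
  have hdvd : (2 * m : ℤ) ∣ r - C.ind u := by
    exact_mod_cast (ZMod.intCast_eq_intCast_iff_dvd_sub _ _ _).1 (by rw [C.cast_ind, hu])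
  have := Int.eq_zero_of_abs_lt_dvd hdvd (abs_lt.2 ⟨by omega, by omega⟩)
  omega

theorem ind_eq_zero {u : G} (hu : C.f u = 0) : C.ind u = 0 :=
  C.ind_eq_of_cast (by have := C.pos; omega) (by omega) (by rw [hu, Int.cast_zero])

theorem ind_mul_of_f_eq_zero (x : G) {c : G} (hc : C.f c = 0) : C.ind (x * c) = C.ind x :=
  C.ind_eq_of_cast (C.ind_mem x).1 (C.ind_mem x).2 (by rw [C.map_mul, hc, add_zero, C.cast_ind])

def Represents (u b : G) (s : ℤ) : Prop :=
  (s : ZMod (2 * m)) = C.f b ∧ u = b * mzpow C.h (carryM m s)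

theorem represents_self (x : G) : C.Represents x x (C.ind x) := by
  refine ⟨C.cast_ind x, ?_⟩
  rw [carryM_eq_zero C.pos (C.ind_mem x).1 (C.ind_mem x).2]
  exact (MufLoop.mul_one x).symm

variable {C}

theorem Represents.ind_eq {u b : G} {s : ℤ} (hu : C.Represents u b s) :
    C.ind u = s - 2 * m * carryM m s := by
  obtain ⟨h₁, h₂⟩ := sub_carryM_mem C.pos s
  refine C.ind_eq_of_cast h₁ h₂ ?_
  have h2m : (2 * m : ZMod (2 * m)) = 0 := by exact_mod_cast ZMod.natCast_self (2 * m)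
  rw [hu.2, C.map_mul, C.f_mzpow, add_zero, ← hu.1]
  push_cast
  rw [h2m, zero_mul, sub_zero]

theorem Represents.cmul {u v b c : G} {s t : ℤ} (hu : C.Represents u b s)
    (hv : C.Represents v c t) : C.Represents (u ∗ v) (b * c) (s + t) := by
  refine ⟨by push_cast; rw [hu.1, hv.1, C.map_mul], ?_⟩
  have hσ : sgnM m (C.ind u + C.ind v) = carryM m (s + t) - carryM m s - carryM m t := by
    obtain ⟨hs₁, hs₂⟩ := sub_carryM_mem C.pos s
    obtain ⟨ht₁, ht₂⟩ := sub_carryM_mem C.pos t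
    rw [hu.ind_eq, hv.ind_eq, sgnM_eq_carryM C.pos (by linarith) (by linarith),
      show s - 2 * m * carryM m s + (t - 2 * m * carryM m t)
        = s + t - 2 * m * (carryM m s + carryM m t) by ring, carryM_sub_mul C.pos]
    ring
  have hh := C.isCentral_h
  rw [cmulM, hσ, hu.2, hv.2, (hh.mzpow _).mul_mul_mul_comm (hh.mzpow _),
    ← (hh.mzpow _).assoc_right, ← hh.mzpow_add, ← hh.mzpow_add]
  ring_nf

variable (C)

theorem represents_cmul_cmul (x y z : G) :
    C.Represents ((x ∗ y) ∗ z) ((x * y) * z) (C.ind x + C.ind y + C.ind z) :=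
  ((C.represents_self x).cmul (C.represents_self y)).cmul (C.represents_self z)

theorem represents_cmul_cmul' (x y z : G) :
    C.Represents (x ∗ (y ∗ z)) (x * (y * z)) (C.ind x + C.ind y + C.ind z) := by
  rw [add_assoc]
  exact (C.represents_self x).cmul ((C.represents_self y).cmul (C.represents_self z))

theorem one_cmul (x : G) : 1 ∗ x = x := by
  rw [cmulM, C.ind_eq_zero C.map_one, zero_add, sgnM_eq_zero (C.ind_mem x).1 (C.ind_mem x).2]
  exact (MufLoop.mul_one _).trans (MufLoop.one_mul x)

theorem cmul_one (x : G) : x ∗ 1 = x := by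
  rw [cmulM, C.ind_eq_zero C.map_one, add_zero, sgnM_eq_zero (C.ind_mem x).1 (C.ind_mem x).2]
  exact (MufLoop.mul_one _).trans (MufLoop.mul_one x)

theorem cmul_eq_mul {a b : G} (ha : C.f a = 0) (hb : C.f b = 0) : a ∗ b = a * b := by
  rw [cmulM, C.ind_eq_zero ha, C.ind_eq_zero hb, add_zero,
    sgnM_eq_zero (by have := C.pos; omega) (by omega)]
  exact MufLoop.mul_one _

theorem f_inv_mzpow (e : ℤ) : C.f (mzpow C.h e)⁻¹ = 0 := by
  rw [C.map_inv, C.f_mzpow, neg_zero]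

theorem bijective_cmul_left (a : G) : Function.Bijective (a ∗ ·) := by
  have hg := MufLoop.bijective_mul_self_apply (fun x => mzpow C.h (sgnM m (C.ind a + C.ind x)))
    (fun x => by rw [C.ind_mul_of_f_eq_zero x (C.f_mzpow _)])
    (fun x => by rw [C.ind_mul_of_f_eq_zero x (C.f_inv_mzpow _)])
  convert (MufLoop.bijective_mul_left a).comp hg using 1
  funext x
  exact ((C.isCentral_h.mzpow _).assoc_right a x).symm

theorem bijective_cmul_right (a : G) : Function.Bijective (· ∗ a) := by
  have hg := MufLoop.bijective_mul_self_apply (fun x => mzpow C.h (sgnM m (C.ind x + C.ind a)))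
    (fun x => by rw [C.ind_mul_of_f_eq_zero x (C.f_mzpow _)])
    (fun x => by rw [C.ind_mul_of_f_eq_zero x (C.f_inv_mzpow _)])
  convert (MufLoop.bijective_mul_right a).comp hg using 1
  funext x
  exact ((C.isCentral_h.mzpow _).mul_right_comm x a).symm

theorem cmul_moufang (x y z : G) : ((x ∗ y) ∗ x) ∗ z = x ∗ (y ∗ (x ∗ z)) := by
  have hl := (((C.represents_self x).cmul (C.represents_self y)).cmul
    (C.represents_self x)).cmul (C.represents_self z)
  have hr := (C.represents_self x).cmul ((C.represents_self y).cmul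
    ((C.represents_self x).cmul (C.represents_self z)))
  rw [hl.2, hr.2, MufLoop.moufang]
  ring_nf

theorem cmul_assoc_iff (x y z : G) : x ∗ (y ∗ z) = (x ∗ y) ∗ z ↔ x * (y * z) = (x * y) * z := by
  rw [(C.represents_cmul_cmul' x y z).2, (C.represents_cmul_cmul x y z).2,
    MufLoop.mul_right_cancel_iff]

theorem nucSetM_cmul : nucSetM (· * · : G → G → G) = nucSetM (cmulM m C.ind C.h) := by
  ext u
  simp only [nucSetM, Set.mem_ofPred_eq, C.cmul_assoc_iff]

theorem f_eq_zero_of_associator {mul : G → G → G}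
    (hmul : ∀ x y, C.f (mul x y) = C.f x + C.f y) {x y z w : G}
    (hw : mul (mul x y) z = mul (mul x (mul y z)) w) : C.f w = 0 := by
  have hfw := congrArg C.f hw
  simp only [hmul] at hfw
  linear_combination -hfw

theorem associator_iff (x y z w : G) :
    (x * y) * z = (x * (y * z)) * w ↔ (x ∗ y) ∗ z = (x ∗ (y ∗ z)) ∗ w := by
  have key (hw : C.f w = 0) :
      (x * y) * z = (x * (y * z)) * w ↔ (x ∗ y) ∗ z = (x ∗ (y ∗ z)) ∗ w := by
    have hr := (C.represents_cmul_cmul' x y z).cmul (C.ind_eq_zero hw ▸ C.represents_self w)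
    rw [add_zero] at hr
    rw [(C.represents_cmul_cmul x y z).2, hr.2, MufLoop.mul_right_cancel_iff]
  exact ⟨fun hw => (key (C.f_eq_zero_of_associator C.map_mul hw)).1 hw,
    fun hw => (key (C.f_eq_zero_of_associator C.map_cmul hw)).2 hw⟩

theorem associatorSet_subset_ker : associatorSet (· * · : G → G → G) ⊆ {u | C.f u = 0} :=
  fun _ ⟨_, _, _, hw⟩ => C.f_eq_zero_of_associator C.map_mul hw

theorem isSubloopM_ker : IsSubloopM (· * · : G → G → G) 1 {u | C.f u = 0} := by
  refine ⟨C.map_one, fun a ha b hb => ?_,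
    fun a ha b hb => ⟨a⁻¹ * b, ?_, MufLoop.mul_inv_cancel_left a b⟩,
    fun a ha b hb => ⟨b * a⁻¹, ?_, MufLoop.inv_mul_cancel_right b a⟩⟩ <;>
  simp_all only [Set.mem_ofPred_eq, C.map_mul, C.map_inv, neg_zero, add_zero]

theorem ker_mul_iff {mul : G → G → G} (hmul : ∀ x y, C.f (mul x y) = C.f x + C.f y) {a : G}
    (ha : C.f a = 0) (c : G) :
    (C.f (mul a c) = 0 ↔ C.f c = 0) ∧ (C.f (mul c a) = 0 ↔ C.f c = 0) := by
  simp only [hmul, ha, zero_add, add_zero, and_self]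

theorem genSubloopM_associatorSet_subset_ker :
    genSubloopM (· * · : G → G → G) 1 (associatorSet (· * ·)) ⊆ {u | C.f u = 0} :=
  genSubloopM_subset C.isSubloopM_ker C.associatorSet_subset_ker

theorem genSubloopM_associatorSet_eq :
    genSubloopM (· * · : G → G → G) 1 (associatorSet (· * ·))
      = genSubloopM (cmulM m C.ind C.h) 1 (associatorSet (cmulM m C.ind C.h)) := by
  have hT : associatorSet (· * · : G → G → G) = associatorSet (cmulM m C.ind C.h) := by
    ext w
    simp only [associatorSet, Set.mem_ofPred_eq, C.associator_iff]
  rw [← hT]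
  exact genSubloopM_eq_of_eqOn (K := {u | C.f u = 0}) C.map_one
    (fun _ ha => C.ker_mul_iff C.map_mul ha) (fun _ ha => C.ker_mul_iff C.map_cmul ha)
    (fun _ ha _ hb => (C.cmul_eq_mul ha hb).symm) C.associatorSet_subset_ker

end CyclicConstruction

theorem stmt11_general (m : ℕ) (G : Type*) [MufLoop G]
    (f : G → ZMod (2 * m)) (hf : ∀ x y : G, f (x * y) = f x + f y)
    (S : Set G)
    (hSker : ∀ x : G, x ∈ S ↔ f x = 0)
    (ind : G → ℤ)
    (hindM : ∀ x : G, ind x ∈ Set.Icc (1 - (m : ℤ)) (m : ℤ))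
    (hind : ∀ x : G, ((ind x : ZMod (2 * m))) = f x)
    (h : G) (hhS : h ∈ S)
    (hhcomm : ∀ y : G, h * y = y * h)
    (hhassoc : ∀ y z : G, h * (y * z) = (h * y) * z ∧
      y * (h * z) = (y * h) * z ∧ y * (z * h) = (y * z) * h) :
    -- (G,*) is a Moufang loop:
    (∀ x : G, cmulM m ind h 1 x = x ∧ cmulM m ind h x 1 = x) ∧
    (∀ a b : G, (∃! x : G, cmulM m ind h a x = b) ∧ (∃! y : G, cmulM m ind h y a = b)) ∧
    (∀ x y z : G, cmulM m ind h (cmulM m ind h (cmulM m ind h x y) x) z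
        = cmulM m ind h x (cmulM m ind h y (cmulM m ind h x z))) ∧
    -- the associators coincide:
    (∀ x y z w : G, (x * y) * z = (x * (y * z)) * w ↔
        cmulM m ind h (cmulM m ind h x y) z
          = cmulM m ind h (cmulM m ind h x (cmulM m ind h y z)) w) ∧
    -- the associator subloops coincide, as loops:
    (genSubloopM (· * · : G → G → G) 1
        {w : G | ∃ x y z : G, (x * y) * z = (x * (y * z)) * w}
      = genSubloopM (cmulM m ind h) 1
        {w : G | ∃ x y z : G, cmulM m ind h (cmulM m ind h x y) z
            = cmulM m ind h (cmulM m ind h x (cmulM m ind h y z)) w}) ∧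
    (∀ a ∈ genSubloopM (· * · : G → G → G) 1
        {w : G | ∃ x y z : G, (x * y) * z = (x * (y * z)) * w},
      ∀ b ∈ genSubloopM (· * · : G → G → G) 1
        {w : G | ∃ x y z : G, (x * y) * z = (x * (y * z)) * w},
      a * b = cmulM m ind h a b) ∧
    -- the nuclei coincide as sets:
    nucSetM (· * · : G → G → G) = nucSetM (cmulM m ind h) := by
  let C : CyclicConstruction m G :=
    { f, map_mul := hf, ind, ind_mem := hindM, cast_ind := hind, h, f_h := (hSker h).1 hhS,
      isCentral_h := ⟨hhcomm, fun y z => (hhassoc y z).1, fun y z => (hhassoc y z).2.1,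
        fun y z => (hhassoc y z).2.2⟩ }
  have hker := C.genSubloopM_associatorSet_subset_ker
  exact ⟨fun x => ⟨C.one_cmul x, C.cmul_one x⟩,
    fun a b =>
      ⟨(C.bijective_cmul_left a).existsUnique b, (C.bijective_cmul_right a).existsUnique b⟩,
    C.cmul_moufang, C.associator_iff, C.genSubloopM_associatorSet_eq,
    fun a ha b hb => (C.cmul_eq_mul (hker ha) (hker hb)).symm, C.nucSetM_cmul⟩

/-- Cyclic construction for Moufang loops (Theorem "Cyclic"): with S ⊴ G, G/S
cyclic of order 2m generated by α (encoded via f and ind as before) and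
1 ≠ h ∈ S ∩ Z(G), the groupoid (G,*), x*y = xy·h^{σ(ind x + ind y)}, is a
Moufang loop; the associators of (G,·) and (G,*) coincide; the associator
subloops A(G,·) and A(G,*) coincide as loops; and the nuclei N(G,·) and N(G,*)
coincide as sets. -/
theorem stmt11 (m : ℕ) (hm : 0 < m) (G : Type*) [MufLoop G]
    (f : G → ZMod (2 * m)) (hf : ∀ x y : G, f (x * y) = f x + f y)
    (hfsurj : Function.Surjective f)
    (S : Set G) (hSnormal : IsNormalSubloopM (· * · : G → G → G) 1 S)
    (hSker : ∀ x : G, x ∈ S ↔ f x = 0)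
    (ind : G → ℤ)
    (hindM : ∀ x : G, ind x ∈ Set.Icc (1 - (m : ℤ)) (m : ℤ))
    (hind : ∀ x : G, ((ind x : ZMod (2 * m))) = f x)
    (h : G) (hh1 : h ≠ 1) (hhS : h ∈ S)
    (hhcomm : ∀ y : G, h * y = y * h)
    (hhassoc : ∀ y z : G, h * (y * z) = (h * y) * z ∧
      y * (h * z) = (y * h) * z ∧ y * (z * h) = (y * z) * h) :
    -- (G,*) is a Moufang loop:
    (∀ x : G, cmulM m ind h 1 x = x ∧ cmulM m ind h x 1 = x) ∧
    (∀ a b : G, (∃! x : G, cmulM m ind h a x = b) ∧ (∃! y : G, cmulM m ind h y a = b)) ∧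
    (∀ x y z : G, cmulM m ind h (cmulM m ind h (cmulM m ind h x y) x) z
        = cmulM m ind h x (cmulM m ind h y (cmulM m ind h x z))) ∧
    -- the associators coincide:
    (∀ x y z w : G, (x * y) * z = (x * (y * z)) * w ↔
        cmulM m ind h (cmulM m ind h x y) z
          = cmulM m ind h (cmulM m ind h x (cmulM m ind h y z)) w) ∧
    -- the associator subloops coincide, as loops:
    (genSubloopM (· * · : G → G → G) 1
        {w : G | ∃ x y z : G, (x * y) * z = (x * (y * z)) * w}
      = genSubloopM (cmulM m ind h) 1
        {w : G | ∃ x y z : G, cmulM m ind h (cmulM m ind h x y) z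
            = cmulM m ind h (cmulM m ind h x (cmulM m ind h y z)) w}) ∧
    (∀ a ∈ genSubloopM (· * · : G → G → G) 1
        {w : G | ∃ x y z : G, (x * y) * z = (x * (y * z)) * w},
      ∀ b ∈ genSubloopM (· * · : G → G → G) 1
        {w : G | ∃ x y z : G, (x * y) * z = (x * (y * z)) * w},
      a * b = cmulM m ind h a b) ∧
    -- the nuclei coincide as sets:
    nucSetM (· * · : G → G → G) = nucSetM (cmulM m ind h) :=
  stmt11_general m G f hf S hSker ind hindM hind h hhS hhcomm hhassoc
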